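/- Suppose a learned model m satisfies a one-step error bound ‖m(s,a) − f(s,a)‖ ≤ δ where f is the true dynamics, the true dynamics and the model are both L_f-Lipschitz in the state (‖f(s,a) − f(s',a)‖ ≤ L_f‖s−s'‖ under the same actions), with L_f ≥ 1. Then the k-step model rollout state ŝ_k (starting from the same initial state and applying the same action sequence) satisfies ‖ŝ_k − s_k‖ ≤ δ · (L_f^k − 1)/(L_f − 1) when L_f > 1, and ‖ŝ_k − s_k‖ ≤ kδ when L_f = 1, where s_k is the true k-step state. -/
import Mathlib


theorem model_rollout_error_bound {S A : Type*} [NormedAddCommGroup S]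
    (f m : S → A → S) (δ Lf : ℝ) (a : ℕ → A) (s sm : ℕ → S) (k : ℕ)
    (hLf : 1 ≤ Lf)
    (herr : ∀ x b, ‖m x b - f x b‖ ≤ δ)
    (hfLip : ∀ x y b, ‖f x b - f y b‖ ≤ Lf * ‖x - y‖)
    (hmLip : ∀ x y b, ‖m x b - m y b‖ ≤ Lf * ‖x - y‖)
    (hs : ∀ i, s (i + 1) = f (s i) (a i))
    (hsm0 : sm 0 = s 0)
    (hsm : ∀ i, sm (i + 1) = m (sm i) (a i)) :
    (1 < Lf → ‖sm k - s k‖ ≤ δ * (Lf ^ k - 1) / (Lf - 1))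
    ∧ (Lf = 1 → ‖sm k - s k‖ ≤ (k : ℝ) * δ) := by
  have hδ : 0 ≤ δ := le_trans (norm_nonneg _) (herr (s 0) (a 0))
  have key : ∀ n, ‖sm n - s n‖ ≤ δ * ∑ i ∈ Finset.range n, Lf ^ i := by
    intro n
    induction n with
    | zero => simp [hsm0]
    | succ n ih =>
      have h1 : ‖sm (n+1) - s (n+1)‖ ≤ Lf * ‖sm n - s n‖ + δ := by
        rw [hsm, hs]
        calc ‖m (sm n) (a n) - f (s n) (a n)‖
            ≤ ‖m (sm n) (a n) - m (s n) (a n)‖ + ‖m (s n) (a n) - f (s n) (a n)‖ := by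
              simpa using norm_sub_le_norm_sub_add_norm_sub _ (m (s n) (a n)) _
          _ ≤ Lf * ‖sm n - s n‖ + δ := add_le_add (hmLip _ _ _) (herr _ _)
      have h2 : Lf * ‖sm n - s n‖ ≤ Lf * (δ * ∑ i ∈ Finset.range n, Lf ^ i) :=
        mul_le_mul_of_nonneg_left ih (by linarith)
      calc ‖sm (n+1) - s (n+1)‖ ≤ Lf * (δ * ∑ i ∈ Finset.range n, Lf ^ i) + δ := by linarith
        _ = δ * ∑ i ∈ Finset.range (n+1), Lf ^ i := by
            rw [geom_sum_succ]; ring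
    done
  constructor
  · intro h
    have := key k
    rw [geom_sum_eq (ne_of_gt h)] at this
    calc ‖sm k - s k‖ ≤ δ * ((Lf ^ k - 1) / (Lf - 1)) := this
      _ = δ * (Lf ^ k - 1) / (Lf - 1) := by ring
  · intro h
    have := key k
    simp [h] at this
    linarith [this]
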